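/- arXiv:2103.12825 — 3 statements merged into one kernel-verified Lean document; each statement's English description precedes it below -/
import Mathlib

section
/- Let Λ ⊆ ℝⁿ be a bounded measurable set, V ∈ L¹(Λ), and (J_d)_{d∈ℕ} a sequence in L¹(Λ) with J_d(x) ≤ V(x) for all x ∈ Λ and ‖V − J_d‖_{L¹(Λ)} → 0 as d → ∞. Then for every γ ∈ ℝ, μ({x ∈ Λ : V(x) ≤ γ} Δ {x ∈ Λ : J_d(x) ≤ γ}) → 0 as d → ∞. -/
/-!
Because `J_d ≤ V` on `Λ`, the symmetric difference of the sublevel sets is `{J_d ≤ γ < V}`.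
A point of this set either lies in the band `{γ < V ≤ γ + δ}`, whose measure tends to `0` with
`δ` since `Λ` has finite measure, or satisfies `V - J_d ≥ δ`, a set whose measure tends to `0`
with `d` because `L¹` convergence implies convergence in measure.
-/

open MeasureTheory Set Filter

open scoped Topology symmDiff

lemma tendsto_measure_Ioc_nhdsGT (ν : Measure ℝ) [IsFiniteMeasureOnCompacts ν] (b : ℝ) :
    Tendsto (fun δ ↦ ν (Ioc b (b + δ))) (𝓝[>] 0) (𝓝 0) := by
  have hempty : ⋂ δ > (0 : ℝ), Ioc b (b + δ) = ∅ := by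
    refine eq_empty_of_forall_notMem fun x hx ↦ ?_
    simp only [mem_iInter, mem_Ioc] at hx
    have hbx : b < x := (hx 1 one_pos).1
    linarith [(hx ((x - b) / 2) (by linarith)).2]
  have := tendsto_measure_biInter_gt (μ := ν) (s := fun δ : ℝ ↦ Ioc b (b + δ)) (a := 0)
    (fun _ _ ↦ nullMeasurableSet_Ioc) (fun _ _ _ hδ ↦ Ioc_subset_Ioc_right (by linarith))
    ⟨1, one_pos, measure_Ioc_lt_top.ne⟩
  rwa [hempty, measure_empty] at this

lemma sep_le_symmDiff_sep_le_subset {α : Type*} {s : Set α} {f g : α → ℝ}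
    (h : ∀ x ∈ s, g x ≤ f x) (γ : ℝ) :
    {x ∈ s | f x ≤ γ} ∆ {x ∈ s | g x ≤ γ} ⊆ {x | g x ≤ γ ∧ γ < f x} ∩ s := by
  rintro x (⟨⟨hx, hfx⟩, hgx⟩ | ⟨⟨hx, hgx⟩, hfx⟩)
  · exact absurd ⟨hx, (h x hx).trans hfx⟩ hgx
  · exact ⟨⟨hgx, not_le.1 fun h ↦ hfx ⟨hx, h⟩⟩, hx⟩

variable {α ι : Type*} [MeasurableSpace α] {μ : Measure α}

lemma tendstoInMeasure_of_tendsto_integral_abs_sub {f : α → ℝ} {g : ι → α → ℝ} {l : Filter ι}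
    (hf : Integrable f μ) (hg : ∀ i, Integrable (g i) μ)
    (h : Tendsto (fun i ↦ ∫ x, |f x - g i x| ∂μ) l (𝓝 0)) : TendstoInMeasure μ g l f := by
  refine tendstoInMeasure_of_tendsto_eLpNorm one_ne_zero (fun i ↦ (hg i).aestronglyMeasurable)
    hf.aestronglyMeasurable ?_
  have hnorm (i : ι) : eLpNorm (g i - f) 1 μ = ENNReal.ofReal (∫ x, |f x - g i x| ∂μ) := by
    rw [eLpNorm_sub_comm, eLpNorm_one_eq_lintegral_enorm,
      ← ofReal_integral_norm_eq_lintegral_enorm (hf.sub (hg i))]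
    rfl
  simpa [hnorm] using (ENNReal.tendsto_ofReal h)

lemma tendsto_measure_le_lt_of_tendstoInMeasure [IsFiniteMeasure μ] {f : α → ℝ}
    {g : ι → α → ℝ} {l : Filter ι} (hf : AEMeasurable f μ) (hg : TendstoInMeasure μ g l f)
    (γ : ℝ) : Tendsto (fun i ↦ μ {x | g i x ≤ γ ∧ γ < f x}) l (𝓝 0) := by
  rw [ENNReal.tendsto_nhds_zero]
  intro ε hε
  have hε2 : 0 < ε / 2 := ENNReal.half_pos hε.ne'
  have hband : Tendsto (fun δ ↦ μ (f ⁻¹' Ioc γ (γ + δ))) (𝓝[>] 0) (𝓝 0) := by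
    simpa only [Measure.map_apply_of_aemeasurable hf measurableSet_Ioc] using
      tendsto_measure_Ioc_nhdsGT (μ.map f) γ
  obtain ⟨δ, hδband, hδ⟩ :=
    ((hband.eventually (gt_mem_nhds hε2)).and self_mem_nhdsWithin).exists
  filter_upwards [(tendstoInMeasure_iff_norm.1 hg δ hδ).eventually (gt_mem_nhds hε2)] with i hi
  have hsub : {x | g i x ≤ γ ∧ γ < f x} ⊆ f ⁻¹' Ioc γ (γ + δ) ∪ {x | δ ≤ ‖g i x - f x‖} := by
    rintro x ⟨hgx, hfx⟩
    by_cases hfδ : f x ≤ γ + δ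
    · exact Or.inl ⟨hfx, hfδ⟩
    · right
      rw [mem_ofPred_eq, Real.norm_eq_abs, abs_sub_comm]
      exact le_abs.2 (Or.inl (by linarith))
  calc μ {x | g i x ≤ γ ∧ γ < f x}
      ≤ μ (f ⁻¹' Ioc γ (γ + δ)) + μ {x | δ ≤ ‖g i x - f x‖} :=
        (measure_mono hsub).trans (measure_union_le _ _)
    _ ≤ ε / 2 + ε / 2 := add_le_add hδband.le hi.le
    _ = ε := ENNReal.add_halves ε

theorem sublevel_convergence_from_below_general (n : ℕ) (Λ : Set (EuclideanSpace ℝ (Fin n)))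
    (hΛb : Bornology.IsBounded Λ)
    (V : EuclideanSpace ℝ (Fin n) → ℝ) (J : ℕ → EuclideanSpace ℝ (Fin n) → ℝ)
    (hV : IntegrableOn V Λ) (hJ : ∀ d, IntegrableOn (J d) Λ)
    (hle : ∀ d, ∀ x ∈ Λ, J d x ≤ V x)
    (hconv : Tendsto (fun d => ∫ x in Λ, |V x - J d x|) atTop (nhds 0)) :
    ∀ γ : ℝ,
      Tendsto (fun d =>
        volume (({x ∈ Λ | V x ≤ γ} \ {x ∈ Λ | J d x ≤ γ}) ∪
                ({x ∈ Λ | J d x ≤ γ} \ {x ∈ Λ | V x ≤ γ})))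
        atTop (nhds 0) := by
  intro γ
  have : IsFiniteMeasure (volume.restrict Λ) := isFiniteMeasure_restrict.2 hΛb.measure_lt_top.ne
  have hJV : TendstoInMeasure (volume.restrict Λ) J atTop V :=
    tendstoInMeasure_of_tendsto_integral_abs_sub hV hJ hconv
  refine tendsto_of_tendsto_of_tendsto_of_le_of_le tendsto_const_nhds
    (tendsto_measure_le_lt_of_tendstoInMeasure hV.aemeasurable hJV γ) (fun _ ↦ zero_le)
    fun d ↦ (measure_mono (sep_le_symmDiff_sep_le_subset (hle d) γ)).trans
      (Measure.le_restrict_apply _ _)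

/-- If `J_d ≤ V` on `Λ` and `‖V - J_d‖_{L¹(Λ)} → 0`, then the measure of the
symmetric difference of the closed sublevel sets `{V ≤ γ}` and `{J_d ≤ γ}`
(within `Λ`) tends to zero. -/
theorem sublevel_convergence_from_below (n : ℕ) (Λ : Set (EuclideanSpace ℝ (Fin n)))
    (hΛb : Bornology.IsBounded Λ) (hΛm : MeasurableSet Λ)
    (V : EuclideanSpace ℝ (Fin n) → ℝ) (J : ℕ → EuclideanSpace ℝ (Fin n) → ℝ)
    (hV : IntegrableOn V Λ) (hJ : ∀ d, IntegrableOn (J d) Λ)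
    (hle : ∀ d, ∀ x ∈ Λ, J d x ≤ V x)
    (hconv : Tendsto (fun d => ∫ x in Λ, |V x - J d x|) atTop (nhds 0)) :
    ∀ γ : ℝ,
      Tendsto (fun d =>
        volume (({x ∈ Λ | V x ≤ γ} \ {x ∈ Λ | J d x ≤ γ}) ∪
                ({x ∈ Λ | J d x ≤ γ} \ {x ∈ Λ | V x ≤ γ})))
        atTop (nhds 0) :=
  sublevel_convergence_from_below_general n Λ hΛb V J hV hJ hle hconv
end

section
/- Let φ be a flow as above and suppose there exist R, η, μ, δ > 0 such that ‖φ(x,t)‖ ≤ R for all x ∈ ROA and t ≥ 0, and ‖φ(z,t)‖ ≤ μ e^{−δt}‖z‖ whenever ‖z‖ ≤ η. Fix β ∈ ℕ, β ≥ 1, and define V(x) := ∫₀^∞ ‖φ(x,t)‖^{2β} dt for x ∈ ROA. Then for every x ∈ ROA, V(x) < ∞; specifically V(x) ≤ F_η(x)·R^{2β} + μ^{2β}η^{2β}/(2δβ), where F_η(x) := inf{t ≥ 0 : ‖φ(x,t)‖ < η} is finite. -/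
/-!
Along a trajectory in the region of attraction, let `T = F_η(x)` be the first time the
trajectory enters the closed ball of radius `η`. Up to time `T` the integrand is at most
`R^{2β}`, which contributes `T·R^{2β}`. From time `T` on, the semigroup property restarts the
flow at `φ(x,T)`, whose norm is at most `η` by continuity, so exponential stability bounds the
integrand by `(μη)^{2β} e^{-2δβ(t-T)}`, whose integral over `(T, ∞)` is `(μη)^{2β}/(2δβ)`.
-/

open Filter MeasureTheory Set Topology

lemma setLIntegral_Ioc_le_of_le {f : ℝ → ℝ} {M : ℝ} (hM : 0 ≤ M) (a b : ℝ)
    (hf : ∀ t ∈ Ioc a b, f t ≤ M) :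
    ∫⁻ t in Ioc a b, ENNReal.ofReal (f t) ≤ ENNReal.ofReal ((b - a) * M) :=
  calc ∫⁻ t in Ioc a b, ENNReal.ofReal (f t)
      ≤ ∫⁻ _ in Ioc a b, ENNReal.ofReal M :=
        setLIntegral_mono measurable_const fun t ht => ENNReal.ofReal_le_ofReal (hf t ht)
    _ = ENNReal.ofReal ((b - a) * M) := by
        rw [setLIntegral_const, Real.volume_Ioc, ENNReal.ofReal_mul' hM, mul_comm]

lemma setLIntegral_Ioi_le_of_le_mul_exp {f : ℝ → ℝ} {C a T : ℝ} (hC : 0 ≤ C) (ha : 0 < a)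
    (hf : ∀ t ∈ Ioi T, f t ≤ C * Real.exp (-a * (t - T))) :
    ∫⁻ t in Ioi T, ENNReal.ofReal (f t) ≤ ENNReal.ofReal (C / a) := by
  have hexp : ∀ t, C * Real.exp (-a * (t - T)) = C * Real.exp (a * T) * Real.exp (-a * t) := by
    intro t
    rw [mul_assoc, ← Real.exp_add]
    ring_nf
  have hint : IntegrableOn (fun t => C * Real.exp (-a * (t - T))) (Ioi T) := by
    simp_rw [hexp]
    exact (integrableOn_exp_mul_Ioi (neg_neg_of_pos ha) T).const_mul _
  calc ∫⁻ t in Ioi T, ENNReal.ofReal (f t)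
      ≤ ∫⁻ t in Ioi T, ENNReal.ofReal (C * Real.exp (-a * (t - T))) :=
        setLIntegral_mono (by fun_prop) fun t ht => ENNReal.ofReal_le_ofReal (hf t ht)
    _ = ENNReal.ofReal (∫ t in Ioi T, C * Real.exp (-a * (t - T))) :=
        (ofReal_integral_eq_lintegral_ofReal hint (ae_of_all _ fun t => by positivity)).symm
    _ = ENNReal.ofReal (C / a) := by
        simp_rw [hexp]
        rw [integral_const_mul, integral_exp_mul_Ioi (neg_neg_of_pos ha), neg_mul,
          Real.exp_neg]
        field_simp

lemma pow_le_mul_exp_of_le_mul_exp {y μ η δ s : ℝ} (hy : 0 ≤ y)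
    (h : y ≤ μ * Real.exp (-δ * s) * η) (k : ℕ) :
    y ^ k ≤ μ ^ k * η ^ k * Real.exp (-(δ * k) * s) :=
  calc y ^ k ≤ (μ * Real.exp (-δ * s) * η) ^ k := pow_le_pow_left₀ hy h k
    _ = μ ^ k * η ^ k * Real.exp (-(δ * k) * s) := by
        rw [mul_pow, mul_pow, ← Real.exp_nat_mul]
        ring_nf

lemma nonempty_setOf_nonneg_lt_of_tendsto {g : ℝ → ℝ} {L η : ℝ}
    (hg : Tendsto g atTop (𝓝 L)) (hη : L < η) : {t | 0 ≤ t ∧ g t < η}.Nonempty :=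
  ((eventually_ge_atTop 0).and (hg.eventually_lt_const hη)).exists

lemma Continuous.apply_csInf_le {g : ℝ → ℝ} (hg : Continuous g) {s : Set ℝ} {η : ℝ}
    (hne : s.Nonempty) (hbdd : BddBelow s) (hs : ∀ t ∈ s, g t ≤ η) : g (sInf s) ≤ η :=
  (isClosed_le hg continuous_const).closure_subset_iff.mpr hs (csInf_mem_closure hne hbdd)

lemma norm_le_mul_exp_of_norm_le {E : Type*} [SeminormedAddCommGroup E] {φ : E → ℝ → E}
    {η μ δ : ℝ}
    (hsemi : ∀ x : E, ∀ t s : ℝ, 0 ≤ t → 0 ≤ s → φ (φ x t) s = φ x (t + s))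
    (hμ : 0 ≤ μ)
    (hstab : ∀ z : E, ‖z‖ ≤ η → ∀ t : ℝ, 0 ≤ t → ‖φ z t‖ ≤ μ * Real.exp (-δ * t) * ‖z‖)
    {x : E} {T : ℝ} (hT : 0 ≤ T) (hxT : ‖φ x T‖ ≤ η) {t : ℝ} (ht : T ≤ t) :
    ‖φ x t‖ ≤ μ * Real.exp (-δ * (t - T)) * η := by
  have hst := hstab (φ x T) hxT (t - T) (sub_nonneg.mpr ht)
  rw [hsemi x T (t - T) hT (sub_nonneg.mpr ht), add_sub_cancel] at hst
  exact hst.trans (mul_le_mul_of_nonneg_left hxT (by positivity))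

theorem converse_lyapunov_finite_general (n : ℕ)
    (φ : EuclideanSpace ℝ (Fin n) → ℝ → EuclideanSpace ℝ (Fin n))
    (hsemi : ∀ x : EuclideanSpace ℝ (Fin n), ∀ t s : ℝ, 0 ≤ t → 0 ≤ s →
      φ (φ x t) s = φ x (t + s))
    (hcont : Continuous (fun p : EuclideanSpace ℝ (Fin n) × ℝ => φ p.1 p.2))
    (ROA : Set (EuclideanSpace ℝ (Fin n)))
    (hROA : ROA = {x | Tendsto (fun t : ℝ => ‖φ x t‖) atTop (nhds 0)})
    (R η μ δ : ℝ) (hη : 0 < η) (hμ : 0 < μ) (hδ : 0 < δ)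
    (hbound : ∀ x ∈ ROA, ∀ t : ℝ, 0 ≤ t → ‖φ x t‖ ≤ R)
    (hstab : ∀ z : EuclideanSpace ℝ (Fin n), ‖z‖ ≤ η →
      ∀ t : ℝ, 0 ≤ t → ‖φ z t‖ ≤ μ * Real.exp (-δ * t) * ‖z‖)
    (β : ℕ) (hβ : 1 ≤ β)
    (x : EuclideanSpace ℝ (Fin n)) (hx : x ∈ ROA) :
    {t : ℝ | 0 ≤ t ∧ ‖φ x t‖ < η}.Nonempty ∧
      (∫⁻ t in Ioi (0 : ℝ), ENNReal.ofReal (‖φ x t‖ ^ (2 * β))) ≤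
        ENNReal.ofReal (sInf {t : ℝ | 0 ≤ t ∧ ‖φ x t‖ < η} * R ^ (2 * β) +
          μ ^ (2 * β) * η ^ (2 * β) / (2 * δ * β)) := by
  have hne := nonempty_setOf_nonneg_lt_of_tendsto (hROA ▸ hx) hη
  refine ⟨hne, ?_⟩
  set T := sInf {t : ℝ | 0 ≤ t ∧ ‖φ x t‖ < η}
  have hT : 0 ≤ T := le_csInf hne fun t ht => ht.1
  have hxT : ‖φ x T‖ ≤ η := (continuous_norm.comp (hcont.comp (.prodMk_right x))).apply_csInf_le
    hne ⟨0, fun t ht => ht.1⟩ fun t ht => ht.2.le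
  have hrate : δ * ((2 * β : ℕ) : ℝ) = 2 * δ * β := by push_cast; ring
  have hhead := setLIntegral_Ioc_le_of_le ((even_two_mul β).pow_nonneg R) 0 T
    fun t ht => pow_le_pow_left₀ (norm_nonneg (φ x t)) (hbound x hx t ht.1.le) (2 * β)
  have hdecay : 0 < 2 * δ * β := mul_pos (by positivity) (Nat.cast_pos.mpr hβ)
  have htail := setLIntegral_Ioi_le_of_le_mul_exp (by positivity) (hrate ▸ hdecay)
    fun t ht => pow_le_mul_exp_of_le_mul_exp (norm_nonneg _)
      (norm_le_mul_exp_of_norm_le hsemi hμ.le hstab hT hxT (le_of_lt ht)) (2 * β)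
  rw [sub_zero] at hhead
  rw [hrate] at htail
  rw [← Ioc_union_Ioi_eq_Ioi hT, lintegral_union measurableSet_Ioi (Ioc_disjoint_Ioi le_rfl),
    ENNReal.ofReal_add (mul_nonneg hT ((even_two_mul β).pow_nonneg R)) (by positivity)]
  exact add_le_add hhead htail

/-- Finiteness of the converse Lyapunov integral `V(x) = ∫₀^∞ ‖φ(x,t)‖^{2β} dt` on the
region of attraction, with the explicit bound `V(x) ≤ F_η(x)·R^{2β} + μ^{2β}η^{2β}/(2δβ)`. -/
theorem converse_lyapunov_finite (n : ℕ)
    (φ : EuclideanSpace ℝ (Fin n) → ℝ → EuclideanSpace ℝ (Fin n))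
    (hsemi : ∀ x : EuclideanSpace ℝ (Fin n), ∀ t s : ℝ, 0 ≤ t → 0 ≤ s →
      φ (φ x t) s = φ x (t + s))
    (hzero : ∀ x : EuclideanSpace ℝ (Fin n), φ x 0 = x)
    (hcont : Continuous (fun p : EuclideanSpace ℝ (Fin n) × ℝ => φ p.1 p.2))
    (ROA : Set (EuclideanSpace ℝ (Fin n)))
    (hROA : ROA = {x | Tendsto (fun t : ℝ => ‖φ x t‖) atTop (nhds 0)})
    (R η μ δ : ℝ) (hR : 0 < R) (hη : 0 < η) (hμ : 0 < μ) (hδ : 0 < δ)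
    (hbound : ∀ x ∈ ROA, ∀ t : ℝ, 0 ≤ t → ‖φ x t‖ ≤ R)
    (hstab : ∀ z : EuclideanSpace ℝ (Fin n), ‖z‖ ≤ η →
      ∀ t : ℝ, 0 ≤ t → ‖φ z t‖ ≤ μ * Real.exp (-δ * t) * ‖z‖)
    (β : ℕ) (hβ : 1 ≤ β)
    (x : EuclideanSpace ℝ (Fin n)) (hx : x ∈ ROA) :
    {t : ℝ | 0 ≤ t ∧ ‖φ x t‖ < η}.Nonempty ∧
      (∫⁻ t in Ioi (0 : ℝ), ENNReal.ofReal (‖φ x t‖ ^ (2 * β))) ≤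
        ENNReal.ofReal (sInf {t : ℝ | 0 ≤ t ∧ ‖φ x t‖ < η} * R ^ (2 * β) +
          μ ^ (2 * β) * η ^ (2 * β) / (2 * δ * β)) :=
  converse_lyapunov_finite_general n φ hsemi hcont ROA hROA R η μ δ hη hμ hδ hbound hstab β hβ x hx
end

section
/- Suppose J ∈ C¹(Ω, ℝ) on a compact set Ω ⊆ ℝⁿ, λ > 0, β ∈ ℕ, φ is a flow of f with φ(x,·) ∈ Ω on [0,T], and ∇J(x)ᵀf(x) ≤ −λ‖x‖^{2β}(1 − J(x)) for all x ∈ Ω. Then for any x ∈ Ω and T ≥ 0 with φ(x,t) ∈ Ω for t ∈ [0,T], J(x) ≥ 1 − (1 − J(φ(x,T)))·exp(−λ∫₀^T ‖φ(x,s)‖^{2β} ds). -/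
open Set

/-! Along the trajectory, `u(t) = 1 - J(φ(x,t))` satisfies `u' ≥ λ‖φ(x,t)‖^{2β} u`, so the
integrating factor `exp(-λ ∫₀^t ‖φ(x,s)‖^{2β} ds)` makes `u` nondecreasing; comparing `t = 0`
with `t = T` gives the bound. -/

theorem HasGradientAt.comp_hasDerivAt_inner {F : Type*} [NormedAddCommGroup F]
    [InnerProductSpace ℝ F] [CompleteSpace F] {J : F → ℝ} {g : F} {γ : ℝ → F} {v : F} {t : ℝ}
    (hJ : HasGradientAt J g (γ t)) (hγ : HasDerivAt γ v t) :
    HasDerivAt (fun s => J (γ s)) (inner ℝ g v) t := by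
  have h := hJ.hasFDerivAt.comp_hasDerivAt t hγ
  rwa [InnerProductSpace.toDual_apply_apply] at h

section IntegratingFactor

variable {u u' c : ℝ → ℝ} {a b : ℝ}

theorem monotoneOn_mul_exp_neg_integral (hc : ContinuousOn c (Icc a b))
    (hu : ContinuousOn u (Icc a b)) (hu' : ∀ t ∈ Ioo a b, HasDerivAt u (u' t) t)
    (hle : ∀ t ∈ Ioo a b, c t * u t ≤ u' t) :
    MonotoneOn (fun t => u t * Real.exp (-∫ s in a..t, c s)) (Icc a b) := by
  rcases lt_or_ge b a with hba | hab
  · rw [Icc_eq_empty_of_lt hba]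
    exact fun _ h => h.elim
  have hc_int : ContinuousOn (fun t => ∫ s in a..t, c s) (Icc a b) := by
    simpa [uIcc_of_le hab] using
      intervalIntegral.continuousOn_primitive_interval (a := a) (b := b)
        (hc.integrableOn_compact isCompact_Icc |>.mono_set (uIcc_of_le hab).subset)
  have hc_deriv : ∀ t ∈ Ioo a b, HasDerivAt (fun t => ∫ s in a..t, c s) (c t) t := fun t ht =>
    intervalIntegral.integral_hasDerivAt_right
      ((hc.mono (Icc_subset_Icc_right ht.2.le)).intervalIntegrable_of_Icc ht.1.le)
      ((hc.mono Ioo_subset_Icc_self).stronglyMeasurableAtFilter isOpen_Ioo t ht)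
      (hc.continuousAt (Icc_mem_nhds ht.1 ht.2))
  refine monotoneOn_of_hasDerivWithinAt_nonneg (convex_Icc a b) (hu.mul hc_int.neg.rexp)
    (f' := fun t => u' t * Real.exp (-∫ s in a..t, c s) +
      u t * (Real.exp (-∫ s in a..t, c s) * -c t)) (fun t ht => ?_) (fun t ht => ?_)
  · rw [interior_Icc] at ht
    exact ((hu' t ht).mul (hc_deriv t ht).neg.exp).hasDerivWithinAt
  · rw [interior_Icc] at ht
    have := mul_nonneg (sub_nonneg.mpr (hle t ht)) (Real.exp_pos (-∫ s in a..t, c s)).le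
    linarith

theorem le_mul_exp_neg_integral (hab : a ≤ b) (hc : ContinuousOn c (Icc a b))
    (hu : ContinuousOn u (Icc a b)) (hu' : ∀ t ∈ Ioo a b, HasDerivAt u (u' t) t)
    (hle : ∀ t ∈ Ioo a b, c t * u t ≤ u' t) :
    u a ≤ u b * Real.exp (-∫ s in a..b, c s) := by
  simpa using monotoneOn_mul_exp_neg_integral hc hu hu' hle (left_mem_Icc.2 hab)
    (right_mem_Icc.2 hab) hab

end IntegratingFactor

theorem gronwall_along_trajectory_general (n : ℕ)
    (Ω : Set (EuclideanSpace ℝ (Fin n)))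
    (f : EuclideanSpace ℝ (Fin n) → EuclideanSpace ℝ (Fin n))
    (φ : EuclideanSpace ℝ (Fin n) → ℝ → EuclideanSpace ℝ (Fin n))
    (hflow : ∀ x t, HasDerivAt (φ x) (f (φ x t)) t)
    (hzero : ∀ x, φ x 0 = x)
    (J : EuclideanSpace ℝ (Fin n) → ℝ) (gJ : EuclideanSpace ℝ (Fin n) → EuclideanSpace ℝ (Fin n))
    (hJ : ∀ x ∈ Ω, HasGradientAt J (gJ x) x)
    (lam : ℝ) (β : ℕ)
    (hdiss : ∀ x ∈ Ω, (inner ℝ (gJ x) (f x) : ℝ) ≤ -lam * ‖x‖ ^ (2 * β) * (1 - J x))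
    (x : EuclideanSpace ℝ (Fin n)) (T : ℝ) (hT : 0 ≤ T)
    (hstay : ∀ t ∈ Icc (0 : ℝ) T, φ x t ∈ Ω) :
    J x ≥ 1 - (1 - J (φ x T)) *
      Real.exp (-(lam * ∫ s in (0 : ℝ)..T, ‖φ x s‖ ^ (2 * β))) := by
  have hφ : Continuous (φ x) := continuous_iff_continuousAt.2 fun t => (hflow x t).continuousAt
  have hu : ∀ t ∈ Icc 0 T, HasDerivAt (fun t => 1 - J (φ x t))
      (-inner ℝ (gJ (φ x t)) (f (φ x t))) t := fun t ht =>
    ((hJ _ (hstay t ht)).comp_hasDerivAt_inner (hflow x t)).const_sub 1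
  have hbound := le_mul_exp_neg_integral hT (c := fun s => lam * ‖φ x s‖ ^ (2 * β))
    (continuous_const.mul (hφ.norm.pow _)).continuousOn
    (fun t ht => (hu t ht).continuousAt.continuousWithinAt)
    (fun t ht => hu t (Ioo_subset_Icc_self ht))
    (fun t ht => by linarith [hdiss _ (hstay t (Ioo_subset_Icc_self ht))])
  simp only [hzero, intervalIntegral.integral_const_mul] at hbound
  linarith

/-- Gronwall bound along trajectories: if `∇J(x)ᵀf(x) ≤ -λ‖x‖^{2β}(1-J(x))` on a compact
set `Ω` and the trajectory stays in `Ω` on `[0,T]`, then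
`J(x) ≥ 1 - (1 - J(φ(x,T))) exp(-λ ∫₀^T ‖φ(x,s)‖^{2β} ds)`. -/
theorem gronwall_along_trajectory (n : ℕ)
    (Ω : Set (EuclideanSpace ℝ (Fin n))) (hΩ : IsCompact Ω)
    (f : EuclideanSpace ℝ (Fin n) → EuclideanSpace ℝ (Fin n)) (hf : Continuous f)
    (φ : EuclideanSpace ℝ (Fin n) → ℝ → EuclideanSpace ℝ (Fin n))
    (hflow : ∀ x t, HasDerivAt (φ x) (f (φ x t)) t)
    (hzero : ∀ x, φ x 0 = x)
    (J : EuclideanSpace ℝ (Fin n) → ℝ) (gJ : EuclideanSpace ℝ (Fin n) → EuclideanSpace ℝ (Fin n))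
    (hJ : ∀ x ∈ Ω, HasGradientAt J (gJ x) x) (hgJ : ContinuousOn gJ Ω)
    (lam : ℝ) (hlam : 0 < lam) (β : ℕ)
    (hdiss : ∀ x ∈ Ω, (inner ℝ (gJ x) (f x) : ℝ) ≤ -lam * ‖x‖ ^ (2 * β) * (1 - J x))
    (x : EuclideanSpace ℝ (Fin n)) (hx : x ∈ Ω) (T : ℝ) (hT : 0 ≤ T)
    (hstay : ∀ t ∈ Icc (0 : ℝ) T, φ x t ∈ Ω) :
    J x ≥ 1 - (1 - J (φ x T)) *
      Real.exp (-(lam * ∫ s in (0 : ℝ)..T, ‖φ x s‖ ^ (2 * β))) :=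
  gronwall_along_trajectory_general n Ω f φ hflow hzero J gJ hJ lam β hdiss x T hT hstay
end
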